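/- If the generalized shift dynamical system (X^Γ, σ_φ) is densely chaotic, i.e. the set S(X^Γ, σ_φ) of scrambled pairs is dense in X^Γ × X^Γ, then φ : Γ → Γ has no periodic point. -/

import Mathlib

open Filter Topology

/-!
Take a periodic point `a` of `φ`. Pairs `(x, y)` that differ at every point of the (finite) orbit of
`a` form a nonempty open set, so by density one of them is scrambled. But `σ_φ^m x` and `σ_φ^m y`
differ at the coordinate `a` for every `m`, so their distance never drops below
`1 / 2 ^ (e⁻¹ a + 1)`, and the liminf cannot vanish.
-/

open scoped Classical in
/-- The metric `D` on `X^Γ`, via a fixed bijection `e : ℕ ≃ Γ`. -/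
noncomputable def gsD {X Γ : Type*} (e : ℕ ≃ Γ) (x y : Γ → X) : ℝ :=
  ∑' n : ℕ, (if x (e n) = y (e n) then (0 : ℝ) else 1) / 2 ^ (n + 1)

/-- The generalized shift `σ_φ`. -/
def gshift {X Γ : Type*} (φ : Γ → Γ) : (Γ → X) → (Γ → X) := fun x => x ∘ φ

/-- `(x, y)` is a scrambled pair of `f` with respect to the distance function `d`. -/
def scrambledPair {Z : Type*} (d : Z → Z → ℝ) (f : Z → Z) (x y : Z) : Prop :=
  liminf (fun n : ℕ => d (f^[n] x) (f^[n] y)) atTop = 0 ∧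
    0 < limsup (fun n : ℕ => d (f^[n] x) (f^[n] y)) atTop

theorem not_scrambledPair_of_forall_le {Z : Type*} {d : Z → Z → ℝ} {f : Z → Z} {x y : Z}
    {c C : ℝ} (hc : 0 < c) (hle : ∀ n, d (f^[n] x) (f^[n] y) ≤ C)
    (hge : ∀ n, c ≤ d (f^[n] x) (f^[n] y)) : ¬ scrambledPair d f x y := by
  rintro ⟨hliminf, -⟩
  have : c ≤ liminf (fun n : ℕ => d (f^[n] x) (f^[n] y)) atTop :=
    le_liminf_of_le (isCoboundedUnder_ge_of_le atTop hle) (.of_forall hge)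
  linarith

theorem hasSum_one_div_two_pow_succ : HasSum (fun n : ℕ => (1 : ℝ) / 2 ^ (n + 1)) 1 := by
  convert hasSum_geometric_two' 1 using 2 with n
  rw [pow_succ', div_div]

section GeneralizedShift

variable {X Γ : Type*}

open scoped Classical in
theorem gsD_term_le (e : ℕ ≃ Γ) (x y : Γ → X) (n : ℕ) :
    (if x (e n) = y (e n) then (0 : ℝ) else 1) / 2 ^ (n + 1) ≤ 1 / 2 ^ (n + 1) := by
  gcongr
  split_ifs <;> norm_num

open scoped Classical in
theorem summable_gsD_term (e : ℕ ≃ Γ) (x y : Γ → X) :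
    Summable fun n : ℕ => (if x (e n) = y (e n) then (0 : ℝ) else 1) / 2 ^ (n + 1) :=
  hasSum_one_div_two_pow_succ.summable.of_nonneg_of_le (fun _ => by positivity)
    (gsD_term_le e x y)

theorem gsD_le_one (e : ℕ ≃ Γ) (x y : Γ → X) : gsD e x y ≤ 1 :=
  hasSum_one_div_two_pow_succ.tsum_eq ▸
    (summable_gsD_term e x y).tsum_le_tsum (gsD_term_le e x y)
      hasSum_one_div_two_pow_succ.summable

theorem one_div_two_pow_le_gsD (e : ℕ ≃ Γ) {x y : Γ → X} {b : Γ} (h : x b ≠ y b) :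
    1 / 2 ^ ((e.symm b : ℕ) + 1) ≤ gsD e x y := by
  have := (summable_gsD_term e x y).le_tsum (e.symm b) fun _ _ => by positivity
  simpa [gsD, h] using this

theorem gshift_iterate (φ : Γ → Γ) (m : ℕ) (x : Γ → X) :
    (gshift φ)^[m] x = x ∘ φ^[m] := by
  induction m with
  | zero => rfl
  | succ k ih => rw [Function.iterate_succ_apply', ih, Function.iterate_succ]; rfl

theorem not_scrambledPair_gshift_of_forall_iterate_ne (e : ℕ ≃ Γ) (φ : Γ → Γ) {x y : Γ → X}
    {a : Γ} (h : ∀ m, x (φ^[m] a) ≠ y (φ^[m] a)) :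
    ¬ scrambledPair (gsD e) (gshift φ) x y :=
  not_scrambledPair_of_forall_le (c := 1 / 2 ^ ((e.symm a : ℕ) + 1)) (by positivity)
    (fun _ => gsD_le_one e _ _) fun m =>
      one_div_two_pow_le_gsD e (b := a) (by simpa [gshift_iterate] using h m)

theorem isOpen_setOf_forall_mem_ne [TopologicalSpace X] [T2Space X] {s : Set Γ}
    (hs : s.Finite) : IsOpen {p : (Γ → X) × (Γ → X) | ∀ b ∈ s, p.1 b ≠ p.2 b} := by
  simp only [Set.ofPred_forall]
  exact hs.isOpen_biInter fun b _ => isOpen_ne_fun (by fun_prop) (by fun_prop)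

end GeneralizedShift

theorem Function.IsPeriodicPt.finite_range_iterate {α : Type*} {f : α → α} {n : ℕ} {x : α}
    (h : Function.IsPeriodicPt f n x) (hn : 0 < n) : (Set.range fun m => f^[m] x).Finite := by
  refine ((Set.finite_Iio n).image fun k => f^[k] x).subset ?_
  rintro _ ⟨m, rfl⟩
  exact ⟨m % n, Nat.mod_lt m hn, h.iterate_mod_apply m⟩

theorem stmt7_general {X Γ : Type*} [TopologicalSpace X] [DiscreteTopology X]
    [Nontrivial X] (e : ℕ ≃ Γ) (φ : Γ → Γ)
    (hdense : Dense {p : (Γ → X) × (Γ → X) | scrambledPair (gsD e) (gshift φ) p.1 p.2}) :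
    ¬ ∃ a : Γ, ∃ n : ℕ, 1 ≤ n ∧ φ^[n] a = a := by
  rintro ⟨a, n, hn, ha⟩
  have hopen := isOpen_setOf_forall_mem_ne (X := X)
    ((show Function.IsPeriodicPt φ n a from ha).finite_range_iterate hn)
  obtain ⟨x₀, x₁, hne⟩ := exists_pair_ne X
  obtain ⟨p, hscrambled, hp⟩ :=
    hdense.exists_mem_open hopen ⟨(fun _ => x₀, fun _ => x₁), fun _ _ => hne⟩
  exact not_scrambledPair_gshift_of_forall_iterate_ne e φ (fun m => hp _ ⟨m, rfl⟩) hscrambled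

/-- If the set of scrambled pairs of the generalized shift system
`(X^Γ, σ_φ)` is dense in `X^Γ × X^Γ`, then `φ : Γ → Γ` has no periodic point. -/
theorem stmt7 {X Γ : Type*} [TopologicalSpace X] [DiscreteTopology X] [Finite X]
    [Nontrivial X] [Countable Γ] [Infinite Γ] (e : ℕ ≃ Γ) (φ : Γ → Γ)
    (hdense : Dense {p : (Γ → X) × (Γ → X) | scrambledPair (gsD e) (gshift φ) p.1 p.2}) :
    ¬ ∃ a : Γ, ∃ n : ℕ, 1 ≤ n ∧ φ^[n] a = a :=
  stmt7_general e φ hdense
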